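/- arXiv:1709.02528 — 2 statements merged into one kernel-verified Lean document; each statement's English description precedes it below -/
import Mathlib

section
/- (Proposition 2.) Let N_R, N_S, M be positive integers, let σ² > 0 and ρ > 0 be reals, and for each n ∈ {1, …, M} and i ∈ {1, …, N_S} let g_{n,i} ∈ ℂ^{N_R} be a fixed vector. For a vector λ ∈ ℝ^{M·N_S} with components λ_{n,i}, define Σ_n(λ) = σ²·I_{N_R} + (ρ/N_S) · Σ_{i=1}^{N_S} λ_{n,i} · g_{n,i} g_{n,i}^*, and define R_LB(λ) = log₂ M − N_R·log₂(e·σ²) − (1/M) Σ_{n=1}^M log₂ ( Σ_{t=1}^M ( det(Σ_n(λ) + Σ_t(λ)) )^{-1} ). Then R_LB is a concave function of λ on the nonnegative orthant { λ ∈ ℝ^{M·N_S} : λ_{n,i} ≥ 0 for all n, i }. -/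
open Matrix Real
open scoped ComplexOrder

/-!
`log det` is concave on positive definite matrices: writing `A = C^* C`, the inequality
`a log det A + b log det B ≤ log det (a A + b B)` reduces to `b log det N ≤ log det (a + b N)`
for `N = C^{-*} B C^{-1}`, i.e. to concavity of `log` on the eigenvalues of `N`. Since
`λ ↦ Σ_n(λ) + Σ_t(λ)` is affine with positive definite values on the orthant, each
`λ ↦ log det(Σ_n + Σ_t)⁻¹` is convex there, hence so is `log ∑_t det(Σ_n + Σ_t)⁻¹`
(log-sum-exp of convex functions is convex). `R_LB` is a constant minus a nonnegative multiple
of the sum of these over `n`.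
-/

/-- The covariance matrix `Σ_n(λ) = σ²·I + (ρ/N_S)·Σ_i λ_{n,i}·g_{n,i} g_{n,i}^*`. -/
noncomputable def covOf {NR NS : ℕ} (σ2 ρ : ℝ) (g : Fin NS → (Fin NR → ℂ))
    (lam : Fin NS → ℝ) : Matrix (Fin NR) (Fin NR) ℂ :=
  σ2 • (1 : Matrix (Fin NR) (Fin NR) ℂ)
    + (ρ / (NS : ℝ)) • ∑ i, lam i • vecMulVec (g i) (star (g i))

/-- The closed-form SE lower bound `R_LB(λ)` as a function of the power
allocation vector `λ`. -/
noncomputable def RLB {NR NS M : ℕ} (σ2 ρ : ℝ)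
    (g : Fin M → Fin NS → (Fin NR → ℂ)) (lam : Fin M → Fin NS → ℝ) : ℝ :=
  Real.logb 2 M - (NR : ℝ) * Real.logb 2 (Real.exp 1 * σ2)
    - (1 / (M : ℝ)) * ∑ n, Real.logb 2
        (∑ t, (((covOf σ2 ρ (g n) (lam n)) + (covOf σ2 ρ (g t) (lam t))).det.re)⁻¹)

section ConvexFunctions

variable {𝕜 E β ι : Type*} {s : Set E}

theorem ConvexOn.sum [Semiring 𝕜] [PartialOrder 𝕜] [AddCommMonoid E] [SMul 𝕜 E]
    [AddCommMonoid β] [PartialOrder β] [IsOrderedAddMonoid β] [Module 𝕜 β]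
    (t : Finset ι) {f : ι → E → β} (hs : Convex 𝕜 s)
    (hf : ∀ i ∈ t, ConvexOn 𝕜 s (f i)) :
    ConvexOn 𝕜 s fun x => ∑ i ∈ t, f i x := by
  simpa only [Finset.sum_fn] using
    Finset.sum_induction f (ConvexOn 𝕜 s) (fun _ _ => ConvexOn.add) (convexOn_const 0 hs) hf

theorem ConvexOn.log_sum_exp [AddCommMonoid E] [SMul ℝ E] [Fintype ι] {f : ι → E → ℝ}
    (hs : Convex ℝ s) (hf : ∀ i, ConvexOn ℝ s (f i)) :
    ConvexOn ℝ s fun x => log (∑ i, exp (f i x)) := by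
  refine ⟨hs, fun x hx y hy a b ha hb hab => ?_⟩
  rcases isEmpty_or_nonempty ι with _ | _
  · simp
  set L : E → ℝ := fun x => log (∑ i, exp (f i x))
  have hL (x : E) : ∑ i, exp (f i x - L x) = 1 := by
    have hpos : 0 < ∑ i, exp (f i x) := Finset.sum_pos (fun i _ => exp_pos _) Finset.univ_nonempty
    simp only [L, exp_sub, exp_log hpos, ← Finset.sum_div, div_self hpos.ne']
  -- after normalising by `exp (L x)`, the terms form a probability vector
  -- the weights `exp (f i x - L x)` sum to one, so termwise convexity of `exp` bounds the
  -- normalised sum by `a + b = 1`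
  have key : ∑ i, exp (f i (a • x + b • y)) ≤ exp (a * L x + b * L y) :=
    calc ∑ i, exp (f i (a • x + b • y))
        ≤ ∑ i, exp (a * f i x + b * f i y) :=
          Finset.sum_le_sum fun i _ => exp_le_exp.2 ((hf i).2 hx hy ha hb hab)
      _ = exp (a * L x + b * L y) * ∑ i, exp (a * (f i x - L x) + b * (f i y - L y)) := by
          rw [Finset.mul_sum]
          congr 1 with i
          rw [← exp_add]
          ring_nf
      _ ≤ exp (a * L x + b * L y) * ∑ i, (a * exp (f i x - L x) + b * exp (f i y - L y)) := by
          gcongr with i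
          exact convexOn_exp.2 (Set.mem_univ _) (Set.mem_univ _) ha hb hab
      _ = exp (a * L x + b * L y) := by
          rw [Finset.sum_add_distrib, ← Finset.mul_sum, ← Finset.mul_sum, hL, hL, mul_one,
            mul_one, hab, mul_one]
  calc log (∑ i, exp (f i (a • x + b • y)))
      ≤ log (exp (a * L x + b * L y)) :=
        log_le_log (Finset.sum_pos (fun i _ => exp_pos _) Finset.univ_nonempty) key
    _ = a • L x + b • L y := by rw [log_exp, smul_eq_mul, smul_eq_mul]

end ConvexFunctions

namespace Matrix

variable {n 𝕜 : Type*} [RCLike 𝕜]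

theorem convex_setOf_posDef : Convex ℝ {A : Matrix n n 𝕜 | A.PosDef} := by
  intro A hA B hB a b ha hb hab
  rcases ha.eq_or_lt with rfl | ha
  · obtain rfl : b = 1 := by simpa using hab
    simpa using hB
  exact (hA.smul ha).add_posSemidef (hB.posSemidef.smul hb)

variable [Fintype n] [DecidableEq n]

theorem PosDef.re_det_pos {A : Matrix n n 𝕜} (hA : A.PosDef) : 0 < RCLike.re A.det :=
  (RCLike.pos_iff.mp hA.det_pos).1

theorem PosDef.exists_isUnit_eq_star_mul_self {A : Matrix n n 𝕜} (hA : A.PosDef) :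
    ∃ C : Matrix n n 𝕜, IsUnit C ∧ A = star C * C := by
  open scoped MatrixOrder in
  obtain ⟨C, rfl⟩ := CStarAlgebra.nonneg_iff_eq_star_mul_self.mp hA.posSemidef.nonneg
  have hdet := hA.isUnit
  rw [isUnit_iff_isUnit_det, det_mul] at hdet
  exact ⟨C, (isUnit_iff_isUnit_det C).2 (isUnit_of_mul_isUnit_right hdet), rfl⟩

theorem det_star_mul_mul (C X : Matrix n n 𝕜) :
    (star C * X * C).det = ((‖C.det‖ ^ 2 : ℝ) : 𝕜) * X.det := by
  rw [det_mul, det_mul, star_eq_conjTranspose, det_conjTranspose, RCLike.ofReal_pow,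
    ← RCLike.conj_mul, RCLike.star_def]
  ring

theorem IsHermitian.re_det_eq_prod_eigenvalues {A : Matrix n n 𝕜} (hA : A.IsHermitian) :
    RCLike.re A.det = ∏ i, hA.eigenvalues i := by
  rw [hA.det_eq_prod_eigenvalues, ← RCLike.ofReal_prod, RCLike.ofReal_re]

theorem IsHermitian.det_smul_one_add_smul {N : Matrix n n 𝕜} (hN : N.IsHermitian) (a b : ℝ) :
    (a • 1 + b • N).det = ∏ i, ((a + b * hN.eigenvalues i : ℝ) : 𝕜) := by
  have hdiag : diagonal (fun i => ((a + b * hN.eigenvalues i : ℝ) : 𝕜))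
      = a • 1 + b • diagonal (RCLike.ofReal ∘ hN.eigenvalues) := by
    ext i j
    rcases eq_or_ne i j with rfl | hij
    · simp [RCLike.real_smul_eq_coe_mul]
    · simp [hij]
  have hconj : a • (1 : Matrix n n 𝕜) + b • N
      = Unitary.conjStarAlgAut ℝ _ hN.eigenvectorUnitary
          (diagonal fun i => ((a + b * hN.eigenvalues i : ℝ) : 𝕜)) := by
    rw [hdiag, map_add, map_smul, map_smul, map_one]
    exact congrArg _ (congrArg _ hN.spectral_theorem)
  rw [hconj, Unitary.conjStarAlgAut_apply, det_mul_comm, ← mul_assoc,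
    Unitary.coe_star_mul_self, one_mul, det_diagonal]

theorem PosDef.mul_log_re_det_le_log_re_det_smul_one_add_smul {N : Matrix n n 𝕜}
    (hN : N.PosDef) {a b : ℝ} (ha : 0 ≤ a) (hb : 0 ≤ b) (hab : a + b = 1) :
    b * log (RCLike.re N.det) ≤ log (RCLike.re (a • 1 + b • N).det) := by
  have hμ := hN.eigenvalues_pos
  have hpos (i : n) : 0 < a + b * hN.isHermitian.eigenvalues i := by
    simpa using (convex_Ioi (0 : ℝ)) (Set.mem_Ioi.2 one_pos) (hμ i) ha hb hab
  rw [hN.isHermitian.re_det_eq_prod_eigenvalues, hN.isHermitian.det_smul_one_add_smul,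
    ← RCLike.ofReal_prod, RCLike.ofReal_re, log_prod fun i _ => (hμ i).ne',
    log_prod fun i _ => (hpos i).ne', Finset.mul_sum]
  gcongr with i
  simpa using strictConcaveOn_log_Ioi.concaveOn.2 (Set.mem_Ioi.2 one_pos) (hμ i) ha hb hab

theorem concaveOn_log_re_det :
    ConcaveOn ℝ {A : Matrix n n 𝕜 | A.PosDef} fun A => log (RCLike.re A.det) := by
  refine ⟨convex_setOf_posDef, fun A hA B hB a b ha hb hab => ?_⟩
  obtain ⟨C, hC, rfl⟩ := hA.exists_isUnit_eq_star_mul_self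
  have hCdet := (isUnit_iff_isUnit_det C).1 hC
  set N := star C⁻¹ * B * C⁻¹
  have hN : N.PosDef := (IsUnit.posDef_star_left_conjugate_iff (isUnit_nonsing_inv_iff.2 hC)).2 hB
  have hBN : B = star C * N * C := by
    rw [← mul_assoc, ← mul_assoc, ← star_mul, nonsing_inv_mul _ hCdet, star_one, one_mul,
      mul_assoc, nonsing_inv_mul _ hCdet, mul_one]
  have hk : 0 < ‖C.det‖ ^ 2 := pow_pos (norm_pos_iff.2 hCdet.ne_zero) 2
  have hlog_conj {X : Matrix n n 𝕜} (hX : X.PosDef) : log (RCLike.re (star C * X * C).det)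
      = log (‖C.det‖ ^ 2) + log (RCLike.re X.det) := by
    rw [det_star_mul_mul, RCLike.re_ofReal_mul, log_mul hk.ne' hX.re_det_pos.ne']
  have hlogA : log (RCLike.re (star C * C).det) = log (‖C.det‖ ^ 2) := by
    simpa using hlog_conj PosDef.one
  have hcomb : a • (star C * C) + b • B = star C * (a • 1 + b • N) * C := by
    rw [hBN, mul_add, add_mul, mul_smul_comm, smul_mul_assoc, mul_one, mul_smul_comm,
      smul_mul_assoc]
  have hcomb_posDef : (a • 1 + b • N).PosDef := convex_setOf_posDef PosDef.one hN ha hb hab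
  simp only [hcomb]
  rw [hlog_conj hcomb_posDef, hlogA, hBN, hlog_conj hN, smul_eq_mul, smul_eq_mul]
  linear_combination hN.mul_log_re_det_le_log_re_det_smul_one_add_smul ha hb hab
    + log (‖C.det‖ ^ 2) * hab

end Matrix

section Covariance

variable {NR NS : ℕ}

theorem covOf_posDef {σ2 ρ : ℝ} (hσ2 : 0 < σ2) (hρ : 0 ≤ ρ)
    (g : Fin NS → Fin NR → ℂ) {lam : Fin NS → ℝ} (hlam : ∀ i, 0 ≤ lam i) :
    (covOf σ2 ρ g lam).PosDef :=
  (PosDef.one.smul hσ2).add_posSemidef <|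
    (posSemidef_sum _ fun i _ => (posSemidef_vecMulVec_self_star (g i)).smul (hlam i)).smul
      (div_nonneg hρ (Nat.cast_nonneg _))

theorem covOf_add_covOf_posDef {M : ℕ} {σ2 ρ : ℝ} (hσ2 : 0 < σ2) (hρ : 0 ≤ ρ)
    (g : Fin M → Fin NS → Fin NR → ℂ) {lam : Fin M → Fin NS → ℝ}
    (hlam : ∀ n i, 0 ≤ lam n i) (n t : Fin M) :
    (covOf σ2 ρ (g n) (lam n) + covOf σ2 ρ (g t) (lam t)).PosDef :=
  (covOf_posDef hσ2 hρ (g n) (hlam n)).add (covOf_posDef hσ2 hρ (g t) (hlam t))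

noncomputable def covOfAffineMap (σ2 ρ : ℝ) (g : Fin NS → Fin NR → ℂ) :
    (Fin NS → ℝ) →ᵃ[ℝ] Matrix (Fin NR) (Fin NR) ℂ where
  toFun := covOf σ2 ρ g
  linear := (ρ / NS) • Fintype.linearCombination ℝ fun i => vecMulVec (g i) (star (g i))
  map_vadd' lam v := by
    simp [covOf, Fintype.linearCombination_apply, add_smul, Finset.sum_add_distrib, smul_add]
    abel

theorem convexOn_neg_log_re_det_covOf_add {M : ℕ} {σ2 ρ : ℝ} (hσ2 : 0 < σ2) (hρ : 0 ≤ ρ)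
    (g : Fin M → Fin NS → Fin NR → ℂ) (n t : Fin M) :
    ConvexOn ℝ {lam : Fin M → Fin NS → ℝ | ∀ n i, 0 ≤ lam n i}
      fun lam => -log (covOf σ2 ρ (g n) (lam n) + covOf σ2 ρ (g t) (lam t)).det.re := by
  let Φ : (Fin M → Fin NS → ℝ) →ᵃ[ℝ] Matrix (Fin NR) (Fin NR) ℂ :=
    (covOfAffineMap σ2 ρ (g n)).comp (LinearMap.proj n).toAffineMap
      + (covOfAffineMap σ2 ρ (g t)).comp (LinearMap.proj t).toAffineMap
  exact ((concaveOn_log_re_det.comp_affineMap Φ).subset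
    (fun _ hlam => covOf_add_covOf_posDef hσ2 hρ g hlam n t) (convex_Ici 0)).neg

end Covariance

theorem RLB_concave_general (NR NS M : ℕ)
    (σ2 ρ : ℝ) (hσ2 : 0 < σ2) (hρ : 0 < ρ)
    (g : Fin M → Fin NS → (Fin NR → ℂ)) :
    ConcaveOn ℝ {lam : Fin M → Fin NS → ℝ | ∀ n i, 0 ≤ lam n i}
      (RLB σ2 ρ g) := by
  have hs : Convex ℝ {lam : Fin M → Fin NS → ℝ | ∀ n i, 0 ≤ lam n i} := convex_Ici 0
  have hconvex := ConvexOn.sum Finset.univ hs fun n _ => ConvexOn.log_sum_exp hs fun t =>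
    convexOn_neg_log_re_det_covOf_add hσ2 hρ.le g n t
  refine ((hconvex.smul (by positivity : (0 : ℝ) ≤ 1 / (M * log 2))).neg.add_const
    (logb 2 M - NR * logb 2 (exp 1 * σ2))).congr fun lam hlam => ?_
  have hexp (n t : Fin M) :
      exp (-log (covOf σ2 ρ (g n) (lam n) + covOf σ2 ρ (g t) (lam t)).det.re)
        = ((covOf σ2 ρ (g n) (lam n) + covOf σ2 ρ (g t) (lam t)).det.re)⁻¹ := by
    have hpos : 0 < (covOf σ2 ρ (g n) (lam n) + covOf σ2 ρ (g t) (lam t)).det.re :=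
      (covOf_add_covOf_posDef hσ2 hρ.le g hlam n t).re_det_pos
    rw [exp_neg, exp_log hpos]
  simp only [Pi.add_apply, Pi.neg_apply, RLB, logb, hexp, smul_eq_mul]
  rw [← Finset.sum_div]
  ring

/-- Proposition 2: `R_LB` is a concave function of the power
allocation vector `λ` on the nonnegative orthant. -/
theorem RLB_concave (NR NS M : ℕ) (hNR : 0 < NR) (hNS : 0 < NS) (hM : 0 < M)
    (σ2 ρ : ℝ) (hσ2 : 0 < σ2) (hρ : 0 < ρ)
    (g : Fin M → Fin NS → (Fin NR → ℂ)) :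
    ConcaveOn ℝ {lam : Fin M → Fin NS → ℝ | ∀ n i, 0 ≤ lam n i}
      (RLB σ2 ρ g) :=
  RLB_concave_general NR NS M σ2 ρ hσ2 hρ g
end

section
/- (Proposition 1, high-SNR limit.) Let N_R, N_S, M be positive integers with 2·N_S ≤ N_R, let σ² > 0, and let G₁, …, G_M ∈ ℂ^{N_R×N_S} be matrices such that each G_n has rank N_S and such that for every pair n ≠ t the concatenated matrix [G_n, G_t] ∈ ℂ^{N_R×2N_S} has rank 2·N_S. For ρ > 0 define Σ_n(ρ) = σ²·I_{N_R} + (ρ/N_S)·G_n G_n^* and I_LB(ρ) = log₂ M − N_R·log₂ e − (1/M) Σ_{n=1}^M log₂ ( Σ_{t=1}^M det Σ_n(ρ) / det(Σ_n(ρ) + Σ_t(ρ)) ). Then lim_{ρ → ∞} I_LB(ρ) = log₂ M + N_R·(1 − log₂ e). -/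
/-!
With `A` Hermitian, `det (a • 1 + c • A) = ∏ᵢ (c λᵢ + a)` is a polynomial in `c` of degree
`rank A` when `a ≠ 0`. Since `Σ_n + Σ_t = 2σ² • 1 + (ρ / N_S) • F Fᴴ` with `F = [G_n, G_t]`, for
`n ≠ t` the ratio `det Σ_n / det (Σ_n + Σ_t)` is a quotient of polynomials in `ρ` of degrees
`N_S < 2 N_S` and tends to `0`, while for `t = n` it equals `2 ^ (-N_R)` exactly. So every inner
sum tends to `2 ^ (-N_R)` and its `log₂` to `-N_R`.
-/

open Matrix Real Filter
open scoped ComplexOrder Topology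

namespace Matrix

section Hermitian

variable {n 𝕜 : Type*} [Fintype n] [DecidableEq n] [RCLike 𝕜] {A : Matrix n n 𝕜}

lemma IsHermitian.det_smul_one_add_smul_s9 (hA : A.IsHermitian) (a c : ℝ) :
    (a • 1 + c • A).det = ∏ i, ((c * hA.eigenvalues i + a : ℝ) : 𝕜) := by
  have hcfc : a • 1 + c • A = cfc (fun x => c * x + a) A := by
    rw [cfc_add .., cfc_const_mul_id .., cfc_const ..]
    simp [Algebra.algebraMap_eq_smul_one, add_comm]
  rw [hcfc, hA.cfc_eq]
  simp [IsHermitian.cfc, -Unitary.conjStarAlgAut_apply]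

open Polynomial

noncomputable def IsHermitian.detShiftPoly (hA : A.IsHermitian) (a : ℝ) : ℝ[X] :=
  ∏ i, (C (hA.eigenvalues i) * X + C a)

lemma IsHermitian.eval_detShiftPoly (hA : A.IsHermitian) (a c : ℝ) :
    (((hA.detShiftPoly a).eval c : ℝ) : 𝕜) = (a • 1 + c • A).det := by
  rw [hA.det_smul_one_add_smul_s9, detShiftPoly, eval_prod, RCLike.ofReal_prod]
  exact Finset.prod_congr rfl fun i _ => by simp only [eval_add, eval_mul, eval_C, eval_X, mul_comm]

lemma IsHermitian.degree_detShiftPoly (hA : A.IsHermitian) {a : ℝ} (ha : a ≠ 0) :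
    (hA.detShiftPoly a).degree = A.rank := by
  have hfactor : ∀ i, (C (hA.eigenvalues i) * X + C a).degree
      = ((if hA.eigenvalues i ≠ 0 then 1 else 0 : ℕ) : WithBot ℕ) := fun i => by
    by_cases h : hA.eigenvalues i = 0
    · simp [h, degree_C ha]
    · simp [h, degree_linear h]
  rw [detShiftPoly, degree_prod, Finset.sum_congr rfl fun i _ => hfactor i, ← Nat.cast_sum,
    Finset.sum_boole, hA.rank_eq_card_non_zero_eigs, Fintype.card_subtype]
  simp

lemma IsHermitian.tendsto_det_div_det_atTop_zero {B : Matrix n n 𝕜} (hA : A.IsHermitian)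
    (hB : B.IsHermitian) {a b : ℝ} (ha : a ≠ 0) (hb : b ≠ 0) (hAB : A.rank < B.rank) :
    Tendsto (fun c : ℝ => RCLike.re (a • 1 + c • A).det / RCLike.re (b • 1 + c • B).det)
      atTop (𝓝 0) := by
  have hdeg : (hA.detShiftPoly a).degree < (hB.detShiftPoly b).degree := by
    rw [hA.degree_detShiftPoly ha, hB.degree_detShiftPoly hb]
    exact_mod_cast hAB
  refine (div_tendsto_atTop_zero_of_degree_lt _ _ hdeg).congr fun c => ?_
  simp only [← hA.eval_detShiftPoly, RCLike.ofReal_re, ← hB.eval_detShiftPoly]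

lemma PosDef.re_det_div_re_det_add_self (hA : A.PosDef) :
    RCLike.re A.det / RCLike.re (A + A).det = (2 ^ Fintype.card n)⁻¹ := by
  have hdet : (A + A).det = ((2 ^ Fintype.card n : ℝ) : 𝕜) * A.det := by
    rw [← two_smul 𝕜, det_smul]
    norm_cast
  have hpos : 0 < RCLike.re A.det := (RCLike.pos_iff.mp hA.det_pos).1
  rw [hdet, RCLike.re_ofReal_mul]
  field_simp

end Hermitian

lemma fromCols_mul_conjTranspose_fromCols {n m k R : Type*} [Fintype m] [Fintype k]
    [Semiring R] [Star R] (X : Matrix n m R) (Y : Matrix n k R) :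
    fromCols X Y * (fromCols X Y)ᴴ = X * Xᴴ + Y * Yᴴ := by
  rw [conjTranspose_fromCols_eq_fromRows_conjTranspose, fromCols_mul_fromRows]

end Matrix

section Covariance

variable {m k : Type*} [Fintype m] [DecidableEq m] [Fintype k]

lemma re_det_div_re_det_add_self_of_nonneg {a c : ℝ} (ha : 0 < a) (hc : 0 ≤ c)
    (X : Matrix m k ℂ) :
    (a • 1 + c • (X * Xᴴ)).det.re / (a • 1 + c • (X * Xᴴ) + (a • 1 + c • (X * Xᴴ))).det.re
      = (2 ^ Fintype.card m)⁻¹ :=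
  ((PosDef.one.smul ha).add_posSemidef
    ((posSemidef_self_mul_conjTranspose X).smul hc)).re_det_div_re_det_add_self

lemma tendsto_re_det_div_re_det_add_atTop_zero {a s : ℝ} (ha : 0 < a) (hs : 0 < s)
    {X Y : Matrix m k ℂ} (hrank : X.rank < (fromCols X Y).rank) :
    Tendsto (fun ρ : ℝ => (a • 1 + (ρ / s) • (X * Xᴴ)).det.re /
      (a • 1 + (ρ / s) • (X * Xᴴ) + (a • 1 + (ρ / s) • (Y * Yᴴ))).det.re)
      atTop (𝓝 0) := by
  have hsum : ∀ c : ℝ, a • 1 + c • (X * Xᴴ) + (a • 1 + c • (Y * Yᴴ))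
      = (a + a) • 1 + c • (fromCols X Y * (fromCols X Y)ᴴ) := fun c => by
    rw [fromCols_mul_conjTranspose_fromCols, add_smul, smul_add]
    abel
  have hlim := (posSemidef_self_mul_conjTranspose X).1.tendsto_det_div_det_atTop_zero
    (posSemidef_self_mul_conjTranspose (fromCols X Y)).1 ha.ne' (b := a + a) (by positivity)
    (by rwa [rank_self_mul_conjTranspose, rank_self_mul_conjTranspose])
  refine (hlim.comp (tendsto_id.atTop_div_const hs)).congr fun ρ => ?_
  simp only [Function.comp_apply, id, hsum, RCLike.re_to_complex]

end Covariance

theorem ILB_high_SNR_limit_general (NR NS M : ℕ)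
    (hNS : 0 < NS) (hM : 0 < M)
    (σ2 : ℝ) (hσ2 : 0 < σ2)
    (G : Fin M → Matrix (Fin NR) (Fin NS) ℂ)
    (hrank : ∀ n, (G n).rank = NS)
    (hrank2 : ∀ n t, n ≠ t → (Matrix.fromCols (G n) (G t)).rank = 2 * NS)
    (Sig : Fin M → ℝ → Matrix (Fin NR) (Fin NR) ℂ)
    (hSig : ∀ n ρ, Sig n ρ = σ2 • (1 : Matrix (Fin NR) (Fin NR) ℂ)
        + (ρ / (NS : ℝ)) • (G n * (G n)ᴴ)) :
    Tendsto (fun ρ : ℝ =>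
        Real.logb 2 M - (NR : ℝ) * Real.logb 2 (Real.exp 1)
          - (1 / (M : ℝ)) * ∑ n, Real.logb 2
              (∑ t, (Sig n ρ).det.re / ((Sig n ρ) + (Sig t ρ)).det.re))
      atTop
      (𝓝 (Real.logb 2 M + (NR : ℝ) * (1 - Real.logb 2 (Real.exp 1)))) := by
  have hpair : ∀ n t, Tendsto (fun ρ => (Sig n ρ).det.re / (Sig n ρ + Sig t ρ).det.re)
      atTop (𝓝 (if n = t then ((2 : ℝ) ^ NR)⁻¹ else 0)) := by
    intro n t
    simp only [hSig]
    split_ifs with hnt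
    · subst hnt
      refine tendsto_const_nhds.congr' ?_
      filter_upwards [eventually_ge_atTop 0] with ρ hρ
      simpa using (re_det_div_re_det_add_self_of_nonneg hσ2 (by positivity) (G n)).symm
    · exact tendsto_re_det_div_re_det_add_atTop_zero hσ2 (Nat.cast_pos.mpr hNS)
        (by rw [hrank, hrank2 n t hnt]; omega)
  have hlog : ∀ n, Tendsto (fun ρ => logb 2 (∑ t, (Sig n ρ).det.re / (Sig n ρ + Sig t ρ).det.re))
      atTop (𝓝 (-NR)) := fun n => by
    have hsum := tendsto_finsetSum Finset.univ fun t _ => hpair n t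
    rw [Finset.sum_ite_eq Finset.univ n, if_pos (Finset.mem_univ n)] at hsum
    simpa [Function.comp_def, Real.logb_inv, Real.logb_pow] using
      (continuousAt_logb (b := 2) (by positivity)).tendsto.comp hsum
  have hlimit : logb 2 M + (NR : ℝ) * (1 - logb 2 (exp 1))
      = logb 2 M - NR * logb 2 (exp 1) - 1 / M * ∑ _n : Fin M, (-NR : ℝ) := by
    simp only [Finset.sum_const, Finset.card_univ, Fintype.card_fin, nsmul_eq_mul]
    field_simp
    ring
  rw [hlimit]
  exact tendsto_const_nhds.sub ((tendsto_finsetSum _ fun n _ => hlog n).const_mul _)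

/-- Proposition 1, high-SNR limit: with `2·N_S ≤ N_R`,
`Σ_n(ρ) = σ²·I + (ρ/N_S)·G_n G_n^*`, each `G_n` of rank `N_S` and every
concatenation `[G_n, G_t]` (for `n ≠ t`) of rank `2·N_S`, the closed-form bound
`I_LB(ρ) = log₂ M − N_R·log₂ e − (1/M)·Σ_n log₂(Σ_t det Σ_n(ρ)/det(Σ_n(ρ)+Σ_t(ρ)))`
satisfies `lim_{ρ→∞} I_LB(ρ) = log₂ M + N_R·(1 − log₂ e)`. -/
theorem ILB_high_SNR_limit (NR NS M : ℕ)
    (hNR : 0 < NR) (hNS : 0 < NS) (hM : 0 < M) (hdim : 2 * NS ≤ NR)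
    (σ2 : ℝ) (hσ2 : 0 < σ2)
    (G : Fin M → Matrix (Fin NR) (Fin NS) ℂ)
    (hrank : ∀ n, (G n).rank = NS)
    (hrank2 : ∀ n t, n ≠ t → (Matrix.fromCols (G n) (G t)).rank = 2 * NS)
    (Sig : Fin M → ℝ → Matrix (Fin NR) (Fin NR) ℂ)
    (hSig : ∀ n ρ, Sig n ρ = σ2 • (1 : Matrix (Fin NR) (Fin NR) ℂ)
        + (ρ / (NS : ℝ)) • (G n * (G n)ᴴ)) :
    Tendsto (fun ρ : ℝ =>
        Real.logb 2 M - (NR : ℝ) * Real.logb 2 (Real.exp 1)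
          - (1 / (M : ℝ)) * ∑ n, Real.logb 2
              (∑ t, (Sig n ρ).det.re / ((Sig n ρ) + (Sig t ρ)).det.re))
      atTop
      (𝓝 (Real.logb 2 M + (NR : ℝ) * (1 - Real.logb 2 (Real.exp 1)))) :=
  ILB_high_SNR_limit_general NR NS M hNS hM σ2 hσ2 G hrank hrank2 Sig hSig
end
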